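/- arXiv:2406.04623 — 7 statements merged into one kernel-verified Lean document; each statement's English description precedes it below -/
import Mathlib

section
/- Every basic open set σ_k in the Macías topology is the union of the coprime cosets r + ⟨k⟩ over all r with ⟨r⟩ + ⟨k⟩ = R; in particular every Macías-open set is open in the Golomb topology on R. -/
def sigmaSet {R : Type*} [CommRing R] (r : R) : Set R :=
  {s | Ideal.span {r} ⊔ Ideal.span {s} = ⊤}

/-- The basic open sets of the Golomb topology: coprime cosets x + I of nonzero ideals. -/
def golombBasis (R : Type*) [CommRing R] : Set (Set R) :=
  {S | ∃ (x : R) (I : Ideal R), I ≠ ⊥ ∧ Ideal.span {x} ⊔ I = ⊤ ∧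
    S = (fun i => x + i) '' (I : Set R)}

lemma sigmaSet_eq_union {R : Type*} [CommRing R] (k : R) :
    sigmaSet k =
      ⋃ r ∈ {r : R | Ideal.span {r} ⊔ Ideal.span {k} = ⊤},
        (fun i => r + i) '' ((Ideal.span {k} : Ideal R) : Set R) := by
  ext s
  simp only [Set.mem_iUnion, Set.mem_image, Set.mem_setOf_eq, SetLike.mem_coe]
  constructor
  · intro hs
    exact ⟨s, by rwa [sup_comm], 0, Ideal.zero_mem _, by ring⟩
  · rintro ⟨r, hr, i, hi, rfl⟩
    have h1 : Ideal.span {r} ≤ Ideal.span {r + i} ⊔ Ideal.span {k} := by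
      rw [Ideal.span_le]
      intro x hx
      rcases Set.mem_singleton_iff.mp hx with rfl
      have hmem : (x + i) + (-i) ∈ Ideal.span {x + i} ⊔ Ideal.span {k} :=
        Ideal.add_mem _
          (Ideal.mem_sup_left (Ideal.subset_span (Set.mem_singleton _)))
          (Ideal.mem_sup_right (neg_mem hi))
      simpa using hmem
    have h2 : Ideal.span {k} ≤ Ideal.span {r + i} ⊔ Ideal.span {k} :=
      le_sup_right
    show Ideal.span {k} ⊔ Ideal.span {r + i} = ⊤
    rw [sup_comm]
    exact top_le_iff.mp (hr ▸ sup_le h1 h2)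

/-- Each σ_k is the union of the coprime cosets r + ⟨k⟩ over all r with ⟨r⟩ + ⟨k⟩ = R;
in particular every Macías-open set is open in the Golomb topology. -/
theorem macias_coarser_than_golomb (R : Type*) [CommRing R] [IsDomain R]
    (hf : ¬ IsField R) :
    (∀ k : R, sigmaSet k =
      ⋃ r ∈ {r : R | Ideal.span {r} ⊔ Ideal.span {k} = ⊤},
        (fun i => r + i) '' ((Ideal.span {k} : Ideal R) : Set R)) ∧
    (∀ S : Set R,
      (TopologicalSpace.generateFrom
        {T : Set R | ∃ k : R, k ≠ 0 ∧ T = sigmaSet k}).IsOpen S →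
      (TopologicalSpace.generateFrom (golombBasis R)).IsOpen S) := by
  refine ⟨fun k => sigmaSet_eq_union k, ?_⟩
  have hle : TopologicalSpace.generateFrom (golombBasis R) ≤
      TopologicalSpace.generateFrom {T : Set R | ∃ k : R, k ≠ 0 ∧ T = sigmaSet k} := by
    apply le_generateFrom
    rintro T ⟨k, hk, rfl⟩
    rw [sigmaSet_eq_union k]
    letI := TopologicalSpace.generateFrom (golombBasis R)
    apply isOpen_biUnion
    intro r hr
    apply TopologicalSpace.isOpen_generateFrom_of_mem
    exact ⟨r, Ideal.span {k}, by simpa [Ideal.span_eq_bot] using hk, hr, rfl⟩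
  exact fun S hS => hle S hS
end

section
/- Let R be a principal ideal domain that is not a field and let p ∈ R be a prime element. Then the closure of the singleton {p} in the Macías topology τ_R equals the principal ideal ⟨p⟩. -/
/-- In a PID that is not a field, the closure of {p} (p prime) in the Macías topology
is the principal ideal ⟨p⟩. -/
theorem closure_singleton_prime (R : Type*) [CommRing R] [IsDomain R]
    [IsPrincipalIdealRing R] (hf : ¬ IsField R) (p : R) (hp : Prime p) :
    letI : TopologicalSpace R :=
      TopologicalSpace.generateFrom (Set.range (sigmaSet (R := R)))
    closure ({p} : Set R) = ((Ideal.span {p} : Ideal R) : Set R) := by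
  letI : TopologicalSpace R :=
    TopologicalSpace.generateFrom (Set.range (sigmaSet (R := R)))
  have hm : (Ideal.span {p} : Ideal R).IsMaximal :=
    PrincipalIdealRing.isMaximal_of_irreducible hp.irreducible
  ext x
  constructor
  · intro hx
    by_contra hxp
    have hopen : IsOpen (sigmaSet p) :=
      TopologicalSpace.GenerateOpen.basic _ ⟨p, rfl⟩
    have hxσ : x ∈ sigmaSet p := by
      by_contra h
      have hne : Ideal.span {p} ⊔ Ideal.span {x} ≠ ⊤ := h
      have := hm.eq_of_le hne le_sup_left
      exact hxp (this ▸ (le_sup_right (a := Ideal.span {p}))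
        (Ideal.mem_span_singleton_self x))
    obtain ⟨y, hy1, hy2⟩ := mem_closure_iff.mp hx _ hopen hxσ
    rw [Set.mem_singleton_iff] at hy2
    subst hy2
    have : Ideal.span {y} ⊔ Ideal.span {y} = ⊤ := hy1
    rw [sup_idem, Ideal.span_singleton_eq_top] at this
    exact hp.not_unit this
  · intro hx
    obtain ⟨c, hc⟩ := Ideal.mem_span_singleton.mp hx
    rw [mem_closure_iff]
    intro o ho hxo
    refine ⟨p, ?_, rfl⟩
    induction ho with
    | basic u hu =>
      obtain ⟨r, rfl⟩ := hu
      have hxu : Ideal.span {r} ⊔ Ideal.span {x} = ⊤ := hxo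
      show Ideal.span {r} ⊔ Ideal.span {p} = ⊤
      by_contra hne
      have h1 : Ideal.span {p} = Ideal.span {r} ⊔ Ideal.span {p} :=
        hm.eq_of_le hne le_sup_right
      have hr : r ∈ Ideal.span {p} := by
        rw [h1]; exact le_sup_left (a := Ideal.span {r}) (Ideal.mem_span_singleton_self r)
      have hxm : x ∈ Ideal.span {p} := hx
      have : (⊤ : Ideal R) ≤ Ideal.span {p} := by
        rw [← hxu]
        exact sup_le ((Ideal.span_singleton_le_iff_mem _).mpr hr)
          ((Ideal.span_singleton_le_iff_mem _).mpr hxm)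
      have : Ideal.span {p} = ⊤ := top_le_iff.mp this
      rw [Ideal.span_singleton_eq_top] at this
      exact hp.not_unit this
    | univ => trivial
    | inter u v _ _ ihu ihv => exact ⟨ihu hxo.1, ihv hxo.2⟩
    | sUnion S _ ih =>
      obtain ⟨t, ht, hxt⟩ := hxo
      exact ⟨t, ht, ih t ht hxt⟩
end

section
/- Let R be a PID that is not a field and let r be a nonzero nonunit with prime factorization r = p₁^{m₁}⋯p_n^{m_n} into pairwise non-associated primes. Then the closure of {r} in the Macías topology equals the intersection of the ideals ⟨p_i⟩, i.e., ⟨p₁⟩ ∩ ⋯ ∩ ⟨p_n⟩. -/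
/-- In a PID that is not a field, for a nonzero nonunit r = p₁^{m₁}⋯p_n^{m_n}
(pairwise non-associated primes p_i), the closure of {r} in the Macías topology
equals ⟨p₁⟩ ∩ ⋯ ∩ ⟨p_n⟩. -/
theorem closure_singleton_factorization (R : Type*) [CommRing R] [IsDomain R]
    [IsPrincipalIdealRing R] (hf : ¬ IsField R) (r : R) (hr0 : r ≠ 0)
    (hru : ¬ IsUnit r) (n : ℕ) (p : Fin n → R) (m : Fin n → ℕ)
    (hp : ∀ i, Prime (p i)) (hm : ∀ i, 1 ≤ m i)
    (hassoc : ∀ i j, i ≠ j → ¬ Associated (p i) (p j))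
    (hfac : r = ∏ i, p i ^ m i) :
    letI : TopologicalSpace R :=
      TopologicalSpace.generateFrom (Set.range (sigmaSet (R := R)))
    closure ({r} : Set R) = ⋂ i, ((Ideal.span {p i} : Ideal R) : Set R) := by
  letI : TopologicalSpace R :=
    TopologicalSpace.generateFrom (Set.range (sigmaSet (R := R)))
  have hpr : ∀ i, p i ∣ r := by
    intro i
    rw [hfac]
    exact dvd_trans (dvd_pow_self (p i) (by have := hm i; omega))
      (Finset.dvd_prod_of_mem _ (Finset.mem_univ i))
  -- characterization of the closure
  have hchar : ∀ x : R, x ∈ closure ({r} : Set R) ↔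
      ∀ k : R, x ∈ sigmaSet k → r ∈ sigmaSet k := by
    intro x
    constructor
    · intro hx k hxk
      have hopen : IsOpen (sigmaSet k) :=
        TopologicalSpace.isOpen_generateFrom_of_mem ⟨k, rfl⟩
      obtain ⟨y, hy1, hy2⟩ := mem_closure_iff.mp hx _ hopen hxk
      rw [Set.mem_singleton_iff] at hy2
      rwa [hy2] at hy1
    · intro h
      rw [mem_closure_iff]
      intro U hU hxU
      suffices hr : r ∈ U by exact ⟨r, hr, rfl⟩
      have key : ∀ V : Set R,
          TopologicalSpace.GenerateOpen (Set.range (sigmaSet (R := R))) V →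
          x ∈ V → r ∈ V := by
        intro V hV
        induction hV with
        | basic W hW =>
          intro hx
          obtain ⟨k, rfl⟩ := hW
          exact h k hx
        | univ => exact fun _ => trivial
        | inter U' V' _ _ ihU ihV => exact fun hx => ⟨ihU hx.1, ihV hx.2⟩
        | sUnion S _ ih =>
          rintro ⟨W, hW, hxW⟩
          exact ⟨W, hW, ih W hW hxW⟩
      exact key U hU hxU
  ext x
  rw [hchar x]
  simp only [Set.mem_iInter, SetLike.mem_coe, Ideal.mem_span_singleton]
  constructor
  · -- closure condition implies each p i divides x
    intro h i
    by_contra hnd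
    -- ⟨p i⟩ is maximal
    have hmax : (Ideal.span {p i}).IsMaximal :=
      PrincipalIdealRing.isMaximal_of_irreducible (hp i).irreducible
    have hxσ : x ∈ sigmaSet (p i) := by
      by_contra hxs
      have hne : Ideal.span {p i} ⊔ Ideal.span {x} ≠ ⊤ := hxs
      have hle : Ideal.span {p i} ⊔ Ideal.span {x} = Ideal.span {p i} :=
        (hmax.eq_of_le hne le_sup_left).symm
      have : Ideal.span {x} ≤ Ideal.span {p i} := le_trans le_sup_right hle.le
      exact hnd (Ideal.mem_span_singleton.mp
        (this (Ideal.mem_span_singleton_self x)))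
    have hrσ : r ∈ sigmaSet (p i) := h (p i) hxσ
    have : Ideal.span ({r} : Set R) ≤ Ideal.span {p i} :=
      (Ideal.span_singleton_le_span_singleton).mpr (hpr i)
    have htop : Ideal.span ({p i} : Set R) = ⊤ := by
      have h2 : Ideal.span {p i} ⊔ Ideal.span {r} = ⊤ := hrσ
      rwa [sup_eq_left.mpr ‹Ideal.span ({r} : Set R) ≤ Ideal.span {p i}›] at h2
    exact (hp i).not_unit (Ideal.span_singleton_eq_top.mp htop)
  · -- divisibility implies closure condition
    intro h k hxk
    by_contra hrk
    have hne : Ideal.span {k} ⊔ Ideal.span {r} ≠ ⊤ := hrk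
    obtain ⟨d, hd⟩ :=
      (IsPrincipalIdealRing.principal (Ideal.span {k} ⊔ Ideal.span {r})).principal
    rw [Ideal.submodule_span_eq] at hd
    have hdk : d ∣ k := by
      have hk' : k ∈ Ideal.span {k} ⊔ Ideal.span {r} :=
        Ideal.mem_sup_left (Ideal.mem_span_singleton_self k)
      rw [hd] at hk'
      exact Ideal.mem_span_singleton.mp hk'
    have hdr : d ∣ r := by
      have hr' : r ∈ Ideal.span {k} ⊔ Ideal.span {r} :=
        Ideal.mem_sup_right (Ideal.mem_span_singleton_self r)
      rw [hd] at hr'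
      exact Ideal.mem_span_singleton.mp hr'
    have hdu : ¬ IsUnit d := fun hu => hne (hd.trans (Ideal.span_singleton_eq_top.mpr hu))
    have hd0 : d ≠ 0 := fun h0 => hr0 (by simpa [h0] using hdr)
    obtain ⟨q, hqirr, hqd⟩ := WfDvdMonoid.exists_irreducible_factor hdu hd0
    have hqprime : Prime q := hqirr.prime
    have hqr : q ∣ r := hqd.trans hdr
    rw [hfac] at hqr
    obtain ⟨i, _, hqpi⟩ := hqprime.exists_mem_finset_dvd hqr
    have hqpi' : q ∣ p i := hqprime.dvd_of_dvd_pow hqpi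
    have hqx : q ∣ x := hqpi'.trans (h i)
    have hqk : q ∣ k := hqd.trans hdk
    have hcop : IsCoprime k x := by
      rw [← Ideal.isCoprime_span_singleton_iff, Ideal.isCoprime_iff_sup_eq]
      exact hxk
    exact hqprime.not_unit (hcop.isUnit_of_dvd' hqk hqx)
end

section
/- Let R be a PID that is not a field. For all x, y ∈ R, the closure of {x·y} in the Macías topology equals the intersection of the closures of {x} and of {y}. -/
lemma sigmaSet_mem_iff {R : Type*} [CommRing R] (k s : R) :
    s ∈ sigmaSet k ↔ IsCoprime k s := by
  rw [← Ideal.isCoprime_span_singleton_iff]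
  exact (Ideal.isCoprime_iff_sup_eq).symm

lemma gen_open_mem {R : Type*} [CommRing R] (z w : R)
    (h : ∀ k : R, z ∈ sigmaSet k → w ∈ sigmaSet k)
    {o : Set R} (ho : TopologicalSpace.GenerateOpen (Set.range (sigmaSet (R := R))) o) :
    z ∈ o → w ∈ o := by
  induction ho with
  | basic s hs => rcases hs with ⟨k, rfl⟩; exact h k
  | univ => exact fun _ => trivial
  | inter s t _ _ ihs iht => exact fun hz => ⟨ihs hz.1, iht hz.2⟩
  | sUnion S _ ih => rintro ⟨s, hs, hzs⟩; exact ⟨s, hs, ih s hs hzs⟩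

/-- In a PID that is not a field, cl({xy}) = cl({x}) ∩ cl({y}) for the Macías topology. -/
theorem closure_singleton_mul (R : Type*) [CommRing R] [IsDomain R]
    [IsPrincipalIdealRing R] (hf : ¬ IsField R) (x y : R) :
    letI : TopologicalSpace R :=
      TopologicalSpace.generateFrom (Set.range (sigmaSet (R := R)))
    closure ({x * y} : Set R) = closure ({x} : Set R) ∩ closure ({y} : Set R) := by
  letI : TopologicalSpace R :=
    TopologicalSpace.generateFrom (Set.range (sigmaSet (R := R)))
  have key : ∀ z w : R, z ∈ closure ({w} : Set R) ↔
      ∀ k : R, z ∈ sigmaSet k → w ∈ sigmaSet k := by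
    intro z w
    constructor
    · intro hz k hk
      have hopen : IsOpen (sigmaSet k) :=
        TopologicalSpace.GenerateOpen.basic _ ⟨k, rfl⟩
      rcases (mem_closure_iff.mp hz) _ hopen hk with ⟨a, ha, haw⟩
      rw [Set.mem_singleton_iff] at haw
      rwa [haw] at ha
    · intro h
      rw [mem_closure_iff]
      intro o ho hzo
      exact ⟨w, gen_open_mem z w h ho hzo, rfl⟩
  ext z
  simp only [Set.mem_inter_iff, key]
  constructor
  · intro h
    constructor
    · intro k hk
      rw [sigmaSet_mem_iff] at *
      exact ((IsCoprime.mul_right_iff).mp ((sigmaSet_mem_iff k (x*y)).mp (h k ((sigmaSet_mem_iff k z).mpr hk)))).1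
    · intro k hk
      rw [sigmaSet_mem_iff] at *
      exact ((IsCoprime.mul_right_iff).mp ((sigmaSet_mem_iff k (x*y)).mp (h k ((sigmaSet_mem_iff k z).mpr hk)))).2
  · rintro ⟨hx, hy⟩ k hk
    rw [sigmaSet_mem_iff]
    exact IsCoprime.mul_right ((sigmaSet_mem_iff k x).mp (hx k hk))
      ((sigmaSet_mem_iff k y).mp (hy k hk))
end

section
/- Let R be a PID that is not a field. The space (R, τ_R) with the Macías topology is ultraconnected: any two nonempty closed sets have nonempty intersection. -/
lemma zero_open_univ {R : Type*} [CommRing R] (o : Set R)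
    (ho : TopologicalSpace.GenerateOpen (Set.range (sigmaSet (R := R))) o)
    (h0 : (0 : R) ∈ o) : ∀ x, x ∈ o := by
  induction ho with
  | basic s hs =>
      obtain ⟨k, rfl⟩ := hs
      intro x
      have hk : Ideal.span {k} = (⊤ : Ideal R) := by
        have := h0
        simpa [sigmaSet, Ideal.span_singleton_eq_bot.mpr rfl] using this
      simp [sigmaSet, hk]
  | univ => intro x; trivial
  | inter s t _ _ ihs iht =>
      intro x; exact ⟨ihs h0.1 x, iht h0.2 x⟩
  | sUnion S _ ih =>
      obtain ⟨s, hsS, hs0⟩ := h0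
      intro x
      exact ⟨s, hsS, ih s hsS hs0 x⟩

/-- In a PID that is not a field, the Macías topology is ultraconnected:
any two nonempty closed sets intersect. -/
theorem macias_ultraconnected (R : Type*) [CommRing R] [IsDomain R]
    [IsPrincipalIdealRing R] (hf : ¬ IsField R) :
    letI : TopologicalSpace R :=
      TopologicalSpace.generateFrom (Set.range (sigmaSet (R := R)))
    ∀ F G : Set R, IsClosed F → IsClosed G → F.Nonempty → G.Nonempty →
      (F ∩ G).Nonempty := by
  letI : TopologicalSpace R :=
    TopologicalSpace.generateFrom (Set.range (sigmaSet (R := R)))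
  intro F G hF hG hFne hGne
  have key : ∀ (C : Set R), IsClosed C → C.Nonempty → (0 : R) ∈ C := by
    intro C hC ⟨c, hc⟩
    by_contra h0
    have hop : IsOpen Cᶜ := hC.isOpen_compl
    have : c ∈ Cᶜ := zero_open_univ Cᶜ hop h0 c
    exact this hc
  exact ⟨0, key F hF hFne, key G hG hGne⟩
end

section
/- Let R be a PID that is not a field, and let x, y be nonzero nonunits. Then x and y are topologically indistinguishable in the Macías topology (every open set containing one contains the other) if and only if x and y have the same set of prime divisors (up to associates). -/
lemma mem_sigmaSet_iff {R : Type*} [CommRing R] {k s : R} :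
    s ∈ sigmaSet k ↔ IsCoprime k s := by
  rw [← Ideal.isCoprime_span_singleton_iff, Ideal.isCoprime_iff_sup_eq]
  rfl

lemma exists_common_prime {R : Type*} [CommRing R] [IsDomain R] [IsPrincipalIdealRing R]
    {k x : R} (hx : x ≠ 0) (h : ¬ IsCoprime k x) : ∃ p, Prime p ∧ p ∣ k ∧ p ∣ x := by
  obtain ⟨d, hd⟩ := (IsPrincipalIdealRing.principal
    (Ideal.span {k} ⊔ Ideal.span {x} : Ideal R)).principal
  have hd' : Ideal.span {k} ⊔ Ideal.span {x} = Ideal.span {d} := hd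
  have hdk : d ∣ k := by
    rw [← Ideal.span_singleton_le_span_singleton, ← hd']
    exact le_sup_left
  have hdx : d ∣ x := by
    rw [← Ideal.span_singleton_le_span_singleton, ← hd']
    exact le_sup_right
  have hd0 : d ≠ 0 := fun h0 => hx (by simpa [h0] using hdx)
  have hdu : ¬ IsUnit d := by
    intro hu
    apply h
    rw [← Ideal.isCoprime_span_singleton_iff, Ideal.isCoprime_iff_sup_eq, hd',
      Ideal.span_singleton_eq_top]
    exact hu
  obtain ⟨p, hp, hpd⟩ := WfDvdMonoid.exists_irreducible_factor hdu hd0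
  exact ⟨p, hp.prime, hpd.trans hdk, hpd.trans hdx⟩

lemma coprime_of_subset {R : Type*} [CommRing R] [IsDomain R] [IsPrincipalIdealRing R]
    {k x y : R} (hx : x ≠ 0)
    (h : {p : R | Prime p ∧ p ∣ x} ⊆ {p : R | Prime p ∧ p ∣ y})
    (hc : IsCoprime k y) : IsCoprime k x := by
  by_contra hnc
  obtain ⟨p, hp, hpk, hpx⟩ := exists_common_prime hx hnc
  have hpy : p ∣ y := (h ⟨hp, hpx⟩).2
  exact hp.not_unit (hc.isUnit_of_dvd' hpk hpy)

lemma prime_dvd_of_coprime_iff {R : Type*} [CommRing R] [IsDomain R] [IsPrincipalIdealRing R]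
    {x y p : R} (hy0 : y ≠ 0) (h : ∀ k : R, IsCoprime k x ↔ IsCoprime k y)
    (hp : Prime p) (hpx : p ∣ x) : p ∣ y := by
  have hnc : ¬ IsCoprime p x := fun hc => hp.not_unit (hc.isUnit_of_dvd' dvd_rfl hpx)
  have hncy : ¬ IsCoprime p y := fun hc => hnc ((h p).mpr hc)
  obtain ⟨q, hq, hqp, hqy⟩ := exists_common_prime hy0 hncy
  exact (hq.irreducible.dvd_symm hp.irreducible hqp).trans hqy

/-- In a PID that is not a field, nonzero nonunits x and y are topologically
indistinguishable in the Macías topology iff they have the same prime divisors. -/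
theorem indistinguishable_iff_same_prime_divisors (R : Type*) [CommRing R] [IsDomain R]
    [IsPrincipalIdealRing R] (hf : ¬ IsField R) (x y : R)
    (hx0 : x ≠ 0) (hxu : ¬ IsUnit x) (hy0 : y ≠ 0) (hyu : ¬ IsUnit y) :
    letI : TopologicalSpace R :=
      TopologicalSpace.generateFrom (Set.range (sigmaSet (R := R)))
    ((∀ U : Set R, IsOpen U → (x ∈ U ↔ y ∈ U)) ↔
      {p : R | Prime p ∧ p ∣ x} = {p : R | Prime p ∧ p ∣ y}) := by
  letI : TopologicalSpace R :=
    TopologicalSpace.generateFrom (Set.range (sigmaSet (R := R)))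
  have key : (∀ U : Set R, IsOpen U → (x ∈ U ↔ y ∈ U)) ↔
      ∀ k : R, (IsCoprime k x ↔ IsCoprime k y) := by
    constructor
    · intro h k
      have hopen : IsOpen (sigmaSet k) :=
        TopologicalSpace.GenerateOpen.basic _ ⟨k, rfl⟩
      simpa [mem_sigmaSet_iff] using h _ hopen
    · intro h U hU
      induction hU with
      | basic s hs =>
        obtain ⟨k, rfl⟩ := hs
        simpa [mem_sigmaSet_iff] using h k
      | univ => simp
      | inter s t _ _ ihs iht => simp [ihs, iht]
      | sUnion S _ ih =>
        simp only [Set.mem_sUnion]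
        exact ⟨fun ⟨t, ht, hxt⟩ => ⟨t, ht, (ih t ht).1 hxt⟩,
          fun ⟨t, ht, hyt⟩ => ⟨t, ht, (ih t ht).2 hyt⟩⟩
  rw [key]
  constructor
  · intro h
    ext p
    simp only [Set.mem_setOf_eq]
    exact ⟨fun ⟨hp, hpx⟩ => ⟨hp, prime_dvd_of_coprime_iff hy0 h hp hpx⟩,
      fun ⟨hp, hpy⟩ => ⟨hp, prime_dvd_of_coprime_iff hx0
        (fun k => (h k).symm) hp hpy⟩⟩
  · intro h k
    exact ⟨fun hc => coprime_of_subset hy0 (le_of_eq h.symm) hc,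
      fun hc => coprime_of_subset hx0 (le_of_eq h) hc⟩
end

section
/- Let R be a PID that is not a field. The set of prime elements 𝒫 is dense in R∖({0} ∪ U(R)) with the subspace topology induced from the Macías topology; in fact R∖({0} ∪ U(R)) equals the union of the sets ⟨p⟩∖{0} over all primes p. -/
theorem exists_prime_dvd_of_ne_zero_of_not_isUnit {α : Type*} [CommMonoidWithZero α]
    [UniqueFactorizationMonoid α] {x : α} (hx0 : x ≠ 0) (hxu : ¬ IsUnit x) :
    ∃ p, Prime p ∧ p ∣ x := by
  obtain ⟨p, hp, hpx⟩ := WfDvdMonoid.exists_irreducible_factor hxu hx0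
  exact ⟨p, UniqueFactorizationMonoid.irreducible_iff_prime.mp hp, hpx⟩

theorem setOf_ne_zero_not_isUnit_eq_iUnion_span_prime {R : Type*} [CommRing R]
    [UniqueFactorizationMonoid R] :
    {x : R | x ≠ 0 ∧ ¬ IsUnit x} =
      ⋃ p ∈ {p : R | Prime p}, (((Ideal.span {p} : Ideal R) : Set R) \ {0}) := by
  ext x
  simp only [Set.mem_ofPred_eq, Set.mem_iUnion, Set.mem_sdiff, SetLike.mem_coe,
    Ideal.mem_span_singleton, Set.mem_singleton_iff, exists_prop]
  constructor
  · rintro ⟨hx0, hxu⟩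
    obtain ⟨p, hp, hpx⟩ := exists_prime_dvd_of_ne_zero_of_not_isUnit hx0 hxu
    exact ⟨p, hp, hpx, hx0⟩
  · rintro ⟨p, hp, hpx, hx0⟩
    exact ⟨hx0, fun hxu => hp.not_isUnit (isUnit_of_dvd_unit hpx hxu)⟩

theorem mem_sigmaSet_of_dvd {R : Type*} [CommRing R] {k x y : R} (hyx : y ∣ x)
    (hx : x ∈ sigmaSet k) : y ∈ sigmaSet k :=
  top_le_iff.mp <| hx.symm.le.trans <|
    sup_le_sup_left (Ideal.span_singleton_le_span_singleton.mpr hyx) _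

theorem TopologicalSpace.GenerateOpen.mem_of_rel {X : Type*} {g : Set (Set X)}
    {r : X → X → Prop} (hg : ∀ s ∈ g, ∀ x ∈ s, ∀ y, r x y → y ∈ s) {s : Set X}
    (hs : GenerateOpen g s) {x y : X} (hxy : r x y) (hx : x ∈ s) : y ∈ s := by
  induction hs with
  | basic s hs => exact hg s hs x hx y hxy
  | univ => trivial
  | inter s t _ _ ihs iht => exact ⟨ihs hx.1, iht hx.2⟩
  | sUnion S _ ih =>
    obtain ⟨s, hsS, hxs⟩ := hx
    exact ⟨s, hsS, ih s hsS hxs⟩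

theorem dense_of_forall_exists_rel {X : Type*} [TopologicalSpace X] {s : Set X}
    (r : X → X → Prop) (hr : ∀ U : Set X, IsOpen U → ∀ x ∈ U, ∀ y, r x y → y ∈ U)
    (hs : ∀ x, ∃ y ∈ s, r x y) : Dense s := by
  refine dense_iff_inter_open.mpr fun U hU ⟨x, hxU⟩ => ?_
  obtain ⟨y, hys, hxy⟩ := hs x
  exact ⟨y, hr U hU x hxU y hxy, hys⟩

theorem primes_dense_in_nonunits_general (R : Type*) [CommRing R] [IsDomain R]
    [IsPrincipalIdealRing R] :
    letI tM : TopologicalSpace {x : R // x ≠ 0} :=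
      TopologicalSpace.generateFrom
        {S : Set {x : R // x ≠ 0} | ∃ k : R, k ≠ 0 ∧
          S = {x : {r : R // r ≠ 0} | (x : R) ∈ sigmaSet k}}
    letI : TopologicalSpace {x : R // x ≠ 0 ∧ ¬ IsUnit x} :=
      TopologicalSpace.induced
        (fun x : {r : R // r ≠ 0 ∧ ¬ IsUnit r} => (⟨x.1, x.2.1⟩ : {r : R // r ≠ 0})) tM
    (Dense {x : {r : R // r ≠ 0 ∧ ¬ IsUnit r} | Prime (x : R)} ∧
      {x : R | x ≠ 0 ∧ ¬ IsUnit x} =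
        ⋃ p ∈ {p : R | Prime p}, (((Ideal.span {p} : Ideal R) : Set R) \ {0})) := by
  refine ⟨?_, setOf_ne_zero_not_isUnit_eq_iUnion_span_prime⟩
  -- the subspace topology is not an instance, so it is left to unification with the goal
  refine @dense_of_forall_exists_rel _ ?_ _
    (fun x y : {r : R // r ≠ 0 ∧ ¬ IsUnit r} => (y : R) ∣ x) ?_ ?_
  · rintro _ ⟨V, hV, rfl⟩ x hx y hyx
    refine hV.mem_of_rel (r := fun x y : {r : R // r ≠ 0} => (y : R) ∣ x) ?_ hyx hx
    rintro _ ⟨k, -, rfl⟩ x hx y hyx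
    exact mem_sigmaSet_of_dvd hyx hx
  · rintro ⟨x, hx0, hxu⟩
    obtain ⟨p, hp, hpx⟩ := exists_prime_dvd_of_ne_zero_of_not_isUnit hx0 hxu
    exact ⟨⟨p, hp.ne_zero, hp.not_isUnit⟩, hp, hpx⟩

/-- In a PID that is not a field, the primes are dense in R∖({0} ∪ U(R)) with the
subspace topology from M(R); moreover R∖({0} ∪ U(R)) = ⋃_{p prime} (⟨p⟩ ∖ {0}). -/
theorem primes_dense_in_nonunits (R : Type*) [CommRing R] [IsDomain R]
    [IsPrincipalIdealRing R] (hf : ¬ IsField R) :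
    letI tM : TopologicalSpace {x : R // x ≠ 0} :=
      TopologicalSpace.generateFrom
        {S : Set {x : R // x ≠ 0} | ∃ k : R, k ≠ 0 ∧
          S = {x : {r : R // r ≠ 0} | (x : R) ∈ sigmaSet k}}
    letI : TopologicalSpace {x : R // x ≠ 0 ∧ ¬ IsUnit x} :=
      TopologicalSpace.induced
        (fun x : {r : R // r ≠ 0 ∧ ¬ IsUnit r} => (⟨x.1, x.2.1⟩ : {r : R // r ≠ 0})) tM
    (Dense {x : {r : R // r ≠ 0 ∧ ¬ IsUnit r} | Prime (x : R)} ∧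
      {x : R | x ≠ 0 ∧ ¬ IsUnit x} =
        ⋃ p ∈ {p : R | Prime p}, (((Ideal.span {p} : Ideal R) : Set R) \ {0})) :=
  primes_dense_in_nonunits_general R
end
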